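/- The planar relativistic collision map R̂ admits the Lax representation with Lax matrix L(x, α, ζ) = [[ζ + i(x₂ − α), x₀ + x₁], [x₀ − x₁, ζ − i(x₂ + α)]]: for all real α, β with q = α − β and all x, y ∈ ℝ³ with ⟨x+y, x+y⟩ + q² ≠ 0, setting (u, v) = R̂_{α,β}(x, y), one has for every ζ ∈ ℂ the 2×2 complex matrix identity L(u, α, ζ) · L(v, β, ζ) = L(y, β, ζ) · L(x, α, ζ). -/

import Mathlib

open Matrix Complex

/-- The three-dimensional Minkowski bilinear form on `ℝ³`. -/
def mink3 (a b : ℝ × ℝ × ℝ) : ℝ :=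
  a.1 * b.1 - a.2.1 * b.2.1 - a.2.2 * b.2.2

/-- The coefficient `k̂(x,y,q)` of the planar relativistic collision map. -/
noncomputable def khat (x y : ℝ × ℝ × ℝ) (q : ℝ) : ℝ :=
  (mink3 x x - mink3 y y + q ^ 2) / (mink3 (x + y) (x + y) + q ^ 2)

/-- The vector `r̂(x,y,q)` of the planar relativistic collision map. -/
noncomputable def rhat (x y : ℝ × ℝ × ℝ) (q : ℝ) : ℝ × ℝ × ℝ :=
  (mink3 (x + y) (x + y) + q ^ 2)⁻¹ •
    ((x.2.1 * y.2.2 - x.2.2 * y.2.1,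
      x.1 * y.2.2 - x.2.2 * y.1,
      x.2.1 * y.1 - x.1 * y.2.1) : ℝ × ℝ × ℝ)

/-- The planar relativistic collision map `R̂_{α,β}`. -/
noncomputable def Rhat (α β : ℝ) (x y : ℝ × ℝ × ℝ) :
    (ℝ × ℝ × ℝ) × (ℝ × ℝ × ℝ) :=
  (khat x y (α - β) • x + (1 - khat y x (α - β)) • y +
      (2 * (α - β)) • rhat x y (α - β),
   (1 - khat x y (α - β)) • x + khat y x (α - β) • y -
      (2 * (α - β)) • rhat x y (α - β))

/-- The Lax matrix
`L(x, α, ζ) = [[ζ + i(x₂ − α), x₀ + x₁], [x₀ − x₁, ζ − i(x₂ + α)]]`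
of the planar relativistic collision map. -/
noncomputable def Lax2D (x : ℝ × ℝ × ℝ) (α : ℝ) (ζ : ℂ) :
    Matrix (Fin 2) (Fin 2) ℂ :=
  !![ζ + Complex.I * ((x.2.2 - α : ℝ) : ℂ), ((x.1 + x.2.1 : ℝ) : ℂ);
     ((x.1 - x.2.1 : ℝ) : ℂ), ζ - Complex.I * ((x.2.2 + α : ℝ) : ℂ)]

/-!
Write `L(x, α, ζ) = (ζ - iα) + A(x)`, where `A(x)` is the traceless part of the Lax matrix. The
map `A` is a spin representation of Minkowski space: `A(a) A(b) = ⟨a, b⟩ - i A(a × b)` for a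
Lorentzian cross product `×`. Comparing the coefficients of `ζ` and the constant terms, the Lax
equation therefore follows from three identities of the collision map: `u + v = x + y`,
`⟨u, v⟩ = ⟨y, x⟩` and `u × v - y × x = q (u - x)`. The first holds because the `r̂` terms cancel
and the coefficients of `x` (and of `y`) in `u` and `v` sum to one; the other two are polynomial
identities once the denominator `⟨x + y, x + y⟩ + q²` is cleared.
-/

def minkCross (a b : ℝ × ℝ × ℝ) : ℝ × ℝ × ℝ :=
  (a.2.1 * b.2.2 - a.2.2 * b.2.1, a.1 * b.2.2 - a.2.2 * b.1, a.2.1 * b.1 - a.1 * b.2.1)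

def spinMatrix (a : ℝ × ℝ × ℝ) : Matrix (Fin 2) (Fin 2) ℂ :=
  !![Complex.I * a.2.2, ((a.1 + a.2.1 : ℝ) : ℂ); ((a.1 - a.2.1 : ℝ) : ℂ), -(Complex.I * a.2.2)]

theorem spinMatrix_add (a b : ℝ × ℝ × ℝ) :
    spinMatrix (a + b) = spinMatrix a + spinMatrix b := by
  ext i j; fin_cases i <;> fin_cases j <;> simp [spinMatrix] <;> ring

theorem spinMatrix_sub (a b : ℝ × ℝ × ℝ) :
    spinMatrix (a - b) = spinMatrix a - spinMatrix b := by
  ext i j; fin_cases i <;> fin_cases j <;> simp [spinMatrix] <;> ring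

theorem spinMatrix_smul (c : ℝ) (a : ℝ × ℝ × ℝ) :
    spinMatrix (c • a) = (c : ℂ) • spinMatrix a := by
  ext i j; fin_cases i <;> fin_cases j <;> simp [spinMatrix] <;> ring

theorem spinMatrix_mul_spinMatrix (a b : ℝ × ℝ × ℝ) :
    spinMatrix a * spinMatrix b =
      (mink3 a b : ℂ) • 1 - Complex.I • spinMatrix (minkCross a b) := by
  ext i j; fin_cases i <;> fin_cases j <;>
    simp [spinMatrix, mink3, minkCross, Matrix.mul_apply, Fin.sum_univ_two] <;>
    ring_nf <;> simp only [Complex.I_sq] <;> ring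

theorem Lax2D_eq_smul_one_add (x : ℝ × ℝ × ℝ) (α : ℝ) (ζ : ℂ) :
    Lax2D x α ζ = (ζ - Complex.I * α) • 1 + spinMatrix x := by
  ext i j; fin_cases i <;> fin_cases j <;> simp [Lax2D, spinMatrix] <;> ring

theorem Lax2D_mul_Lax2D_eq_of (α β : ℝ) (ζ : ℂ) {x y u v : ℝ × ℝ × ℝ}
    (hsum : u + v = x + y) (hdot : mink3 u v = mink3 y x)
    (hcross : minkCross u v - minkCross y x = (α - β) • (u - x)) :
    Lax2D u α ζ * Lax2D v β ζ = Lax2D y β ζ * Lax2D x α ζ := by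
  have hA : spinMatrix u + spinMatrix v = spinMatrix x + spinMatrix y := by
    rw [← spinMatrix_add, ← spinMatrix_add, hsum]
  have hC : spinMatrix (minkCross u v) - spinMatrix (minkCross y x)
      = ((α : ℂ) - β) • (spinMatrix u - spinMatrix x) := by
    rw [← spinMatrix_sub, hcross, spinMatrix_smul, spinMatrix_sub, Complex.ofReal_sub]
  simp only [Lax2D_eq_smul_one_add, add_mul, mul_add, smul_mul_assoc, mul_smul_comm, one_mul,
    mul_one, spinMatrix_mul_spinMatrix, hdot]
  linear_combination (norm := module) (ζ - Complex.I * α) • hA - Complex.I • hC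

theorem Rhat_fst_add_snd (α β : ℝ) (x y : ℝ × ℝ × ℝ) :
    (Rhat α β x y).1 + (Rhat α β x y).2 = x + y := by
  simp only [Rhat]
  module

theorem mink3_Rhat (α β : ℝ) (x y : ℝ × ℝ × ℝ)
    (h : mink3 (x + y) (x + y) + (α - β) ^ 2 ≠ 0) :
    mink3 (Rhat α β x y).1 (Rhat α β x y).2 = mink3 y x := by
  -- `add_comm y x` gives `khat y x` the same denominator `d` as `khat x y` and `rhat x y`
  simp only [Rhat, khat, rhat, add_comm y x]
  set d := mink3 (x + y) (x + y) + (α - β) ^ 2 with hd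
  obtain ⟨x0, x1, x2⟩ := x
  obtain ⟨y0, y1, y2⟩ := y
  simp only [mink3, Prod.mk_add_mk, Prod.smul_mk, smul_eq_mul, Prod.mk_sub_mk] at hd ⊢
  field_simp
  rw [hd]
  ring

theorem minkCross_Rhat (α β : ℝ) (x y : ℝ × ℝ × ℝ)
    (h : mink3 (x + y) (x + y) + (α - β) ^ 2 ≠ 0) :
    minkCross (Rhat α β x y).1 (Rhat α β x y).2 - minkCross y x
      = (α - β) • ((Rhat α β x y).1 - x) := by
  simp only [Rhat, khat, rhat, add_comm y x]
  set d := mink3 (x + y) (x + y) + (α - β) ^ 2 with hd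
  obtain ⟨x0, x1, x2⟩ := x
  obtain ⟨y0, y1, y2⟩ := y
  simp only [mink3, minkCross, Prod.mk_add_mk, Prod.smul_mk, smul_eq_mul, Prod.mk_sub_mk,
    Prod.mk.injEq] at hd ⊢
  refine ⟨?_, ?_, ?_⟩ <;> field_simp <;> rw [hd] <;> ring

/-- The planar relativistic collision map admits the Lax representation with
Lax matrix `L(x, α, ζ)`. -/
theorem planar_collision_lax
    (α β : ℝ) (x y : ℝ × ℝ × ℝ)
    (h : mink3 (x + y) (x + y) + (α - β) ^ 2 ≠ 0)
    (u v : ℝ × ℝ × ℝ) (huv : (u, v) = Rhat α β x y)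
    (ζ : ℂ) :
    Lax2D u α ζ * Lax2D v β ζ = Lax2D y β ζ * Lax2D x α ζ := by
  obtain ⟨rfl, rfl⟩ := Prod.ext_iff.mp huv
  exact Lax2D_mul_Lax2D_eq_of α β ζ (Rhat_fst_add_snd α β x y) (mink3_Rhat α β x y h)
    (minkCross_Rhat α β x y h)
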